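/- Let τ ∈ S^ℕ be acceptable of period N with τ₀ = *, and let k be an integer with N/2 < k < N such that τ_{k+i} = τᵢ for all 1 ≤ i ≤ N−k−1. Define ν₁⋯ν_N ∈ {1,2}^N by νᵢ = τᵢ for 1 ≤ i ≤ N−1 and ν_N = τ_{N−k}′, and let e = (ν_{N−k+1}⋯ν_{k−1}ν_k′ ν₁⋯ν_N)^∞ and ẽ = (ν_{N−k+1}⋯ν_{k−1}ν_k′ ν₁⋯ν_N)^∞ ν_{N−k+1}⋯ν_{N−1}ν_N′. Then e and ẽ lie on distinct arc-components of D̂_τ: for all x̂, ŷ ∈ D̂_τ with e(x̂) = e and e(ŷ) = ẽ, no arc in D̂_τ contains both x̂ and ŷ. -/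
import Mathlib


open Topology Filter
open scoped NNReal

/-- The symbol set `S = {*, 1, 2}`. -/
inductive S : Type
  | star : S
  | one : S
  | two : S
  deriving DecidableEq

/-- The topology on `S` generated by the basis `{{1}, {2}, {*,1,2}}`. -/
instance : TopologicalSpace S :=
  TopologicalSpace.generateFrom {{S.one}, {S.two}}

/-- `a ≈ b` iff `a = b` or one of them is `*`. -/
def S.approx (a b : S) : Prop := a = b ∨ a = S.star ∨ b = S.star

/-- The `n`-th iterate `σⁿ` of the shift map on `S^ℕ`. -/
def shiftN (n : ℕ) (x : ℕ → S) : ℕ → S := fun i => x (n + i)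

/-- `τ` is acceptable: for all `n ≥ 1`, `σⁿ(τ) ≈ τ` implies `σⁿ(τ) = τ`. -/
def Acceptable (τ : ℕ → S) : Prop :=
  ∀ n : ℕ, 1 ≤ n → (∀ i, S.approx (τ (n + i)) (τ i)) → shiftN n τ = τ

/-- `τ` has period `N`: `σ^N(τ) = τ` and `σʲ(τ) ≠ τ` for `1 ≤ j < N`. -/
def HasPeriod (τ : ℕ → S) (N : ℕ) : Prop :=
  shiftN N τ = τ ∧ ∀ j : ℕ, 1 ≤ j → j < N → shiftN j τ ≠ τ

/-- `x` is `τ`-admissible: `xₙ = *` implies `σⁿ(x) = τ`, and `σⁿ(x) ≈ τ` implies `σⁿ(x) = τ`. -/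
def Admissible (τ x : ℕ → S) : Prop :=
  (∀ n : ℕ, x n = S.star → shiftN n x = τ) ∧
  (∀ n : ℕ, (∀ i, S.approx (x (n + i)) (τ i)) → shiftN n x = τ)

/-- `D_τ`, the set of `τ`-admissible sequences. -/
def Dtau (τ : ℕ → S) : Set (ℕ → S) := {x | Admissible τ x}

/-- `πₙ(x̂) = (x̂_{n+i})_{i ≥ 0}` for `x̂ ∈ S^ℤ`. -/
def proj (n : ℤ) (x : ℤ → S) : ℕ → S := fun i => x (n + i)

/-- `D̂_τ = {x̂ ∈ S^ℤ : πₙ(x̂) ∈ D_τ for all n}`. -/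
def Dhat (τ : ℕ → S) : Set (ℤ → S) := {x | ∀ n : ℤ, proj n x ∈ Dtau τ}

/-- The backwards itinerary of `x̂`, as a sequence indexed by `ℕ`:
`bitin x̂ m` is the entry of `x̂` at index `-(m+1)`. -/
def bitin (x : ℤ → S) : ℕ → S := fun m => x (-((m : ℤ) + 1))

/-- A left-infinite sequence `e` occurs in `D̂_τ`. -/
def OccursIn (τ : ℕ → S) (e : ℕ → S) : Prop := ∃ x ∈ Dhat τ, bitin x = e

/-- `T_N(e) = {ŷ ∈ D̂_τ : ŷᵢ ≈ eᵢ for all i ≤ N}`, for `N ≤ -1`. -/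
def TsetN (τ : ℕ → S) (N : ℤ) (e : ℕ → S) : Set (ℤ → S) :=
  {y | y ∈ Dhat τ ∧ ∀ m : ℕ, -((m : ℤ) + 1) ≤ N → S.approx (y (-((m : ℤ) + 1))) (e m)}

/-- `T(e) = T₋₁(e)`. -/
def Tset (τ : ℕ → S) (e : ℕ → S) : Set (ℤ → S) := TsetN τ (-1) e

/-- `A` is an arc with endpoints `a` and `b`: a homeomorphic image of `[0,1]`. -/
def IsArc {X : Type*} [TopologicalSpace X] (A : Set X) (a b : X) : Prop :=
  ∃ f : unitInterval → X, Topology.IsEmbedding f ∧ Set.range f = A ∧ f 0 = a ∧ f 1 = b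

/-- `A` is an arc (a homeomorphic image of `[0,1]`). -/
def IsArcSet {X : Type*} [TopologicalSpace X] (A : Set X) : Prop := ∃ a b, IsArc A a b

/-- The set of `k ≥ 1` with `k ≡ i (mod N)` such that `e₋ₖ⋯e₋₁ ≈ τ₀⋯τₖ₋₁`;
`βⁱ(e)` is its maximum (defined iff this set is nonempty). -/
def BetaSet (τ : ℕ → S) (N : ℕ) (e : ℕ → S) (i : ℕ) : Set ℕ :=
  {k | 1 ≤ k ∧ k % N = i ∧ ∀ m, m < k → S.approx (e m) (τ (k - 1 - m))}

/-- `βⁱ(e)` is defined. -/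
def BetaDefined (τ : ℕ → S) (N : ℕ) (e : ℕ → S) (i : ℕ) : Prop := (BetaSet τ N e i).Nonempty

/-- `φ : [0,∞) → D̂_τ` is a parameterization of the ray `Φ`:
a continuous bijection onto `Φ ⊆ D̂_τ`. -/
def IsParamOf (τ : ℕ → S) (φ : ℝ≥0 → (ℤ → S)) (Φ : Set (ℤ → S)) : Prop :=
  Continuous φ ∧ Function.Injective φ ∧ Set.range φ = Φ ∧ Φ ⊆ Dhat τ

/-- The ray `Φ` originates in `T(e)`: it has a parameterization `φ` with `e(φ(0)) = e`. -/
def OriginatesIn (τ : ℕ → S) (Φ : Set (ℤ → S)) (e : ℕ → S) : Prop :=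
  ∃ φ, IsParamOf τ φ Φ ∧ bitin (φ 0) = e

/-- `d` is a metric on `A` compatible with the subspace topology of `A`. -/
def IsCompatibleDist {X : Type*} [TopologicalSpace X] (A : Set X) (d : X → X → ℝ) : Prop :=
  (∀ x ∈ A, ∀ y ∈ A, 0 ≤ d x y) ∧
  (∀ x ∈ A, ∀ y ∈ A, (d x y = 0 ↔ x = y)) ∧
  (∀ x ∈ A, ∀ y ∈ A, d x y = d y x) ∧
  (∀ x ∈ A, ∀ y ∈ A, ∀ z ∈ A, d x z ≤ d x y + d y z) ∧
  (∀ x ∈ A, ∀ u : Set X, u ∈ nhdsWithin x A ↔ ∃ ε > 0, {y | y ∈ A ∧ d x y < ε} ⊆ u)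

/-- The rays `Φ` and `Ψ` are asymptotic: for a metric `d` compatible with the topology of
`D̂_τ`, they admit parameterizations `φ, ψ` with `d(φ(s), ψ(s)) → 0` as `s → ∞`. -/
def AsymptoticRays (τ : ℕ → S) (Φ Ψ : Set (ℤ → S)) : Prop :=
  ∃ d : (ℤ → S) → (ℤ → S) → ℝ, IsCompatibleDist (Dhat τ) d ∧
    ∃ φ ψ, IsParamOf τ φ Φ ∧ IsParamOf τ ψ Ψ ∧
      Tendsto (fun s => d (φ s) (ψ s)) atTop (nhds 0)

/-- The `n`-th folding step for a ray parameterized by `φ`, with fold times `s` and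
backwards itineraries `E n = Rⁿe`:  `s (n+1)` is the minimal time after `s n` at which the
backwards itinerary differs from `E n`, and just after `s (n+1)` the itinerary is `E (n+1)`. -/
def FoldStep (φ : ℝ≥0 → (ℤ → S)) (s : ℕ → ℝ≥0) (E : ℕ → (ℕ → S)) (n : ℕ) : Prop :=
  s n < s (n + 1) ∧
  bitin (φ (s (n + 1))) ≠ E n ∧
  (∀ u : ℝ≥0, s n < u → u < s (n + 1) → bitin (φ u) = E n) ∧
  E (n + 1) ≠ E n ∧
  ∃ ε : ℝ≥0, 0 < ε ∧ ∀ δ : ℝ≥0, 0 < δ → δ < ε → bitin (φ (s (n + 1) + δ)) = E (n + 1)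

/-- The ray parameterized by `φ` has infinite folding pattern with `Rⁿe = E n` for all `n`. -/
def FoldingFrom (φ : ℝ≥0 → (ℤ → S)) (s : ℕ → ℝ≥0) (E : ℕ → (ℕ → S)) : Prop :=
  s 0 = 0 ∧ bitin (φ 0) = E 0 ∧ ∀ n, FoldStep φ s E n

/-- The folding pattern of the ray parameterized by `φ` is defined through step `M`,
with `Rⁿe = E n` for `n ≤ M`. -/
def FoldingUpTo (φ : ℝ≥0 → (ℤ → S)) (s : ℕ → ℝ≥0) (E : ℕ → (ℕ → S)) (M : ℕ) : Prop :=
  s 0 = 0 ∧ bitin (φ 0) = E 0 ∧ ∀ n, n < M → FoldStep φ s E n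

/-- The left-infinite sequence `W^∞V` (infinitely many copies of the word `W`, followed by
the word `V`, ending at index `-1`), in the indexing of `bitin`. -/
def wrep (W V : List S) : ℕ → S := fun m =>
  if m < V.length then V.getD (V.length - 1 - m) S.star
  else W.getD (W.length - 1 - ((m - V.length) % W.length)) S.star

/-- `a ↦ a′` on `{1,2}` (fixing `*`). -/
def flipS : S → S
  | S.star => S.star
  | S.one => S.two
  | S.two => S.one

/-- The word `ν_a ν_{a+1} ⋯ ν_b`. -/
def seg (ν : ℕ → S) (a b : ℕ) : List S := (List.range (b + 1 - a)).map (fun i => ν (a + i))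

/-- `ν₁⋯ν_N` with `νᵢ = τᵢ` for `1 ≤ i ≤ N-1` and `ν_N = τ_{N-k}′` (Theorem `case3`). -/
def nuCase3 (τ : ℕ → S) (N k : ℕ) : ℕ → S := fun i => if i = N then flipS (τ (N - k)) else τ i

/-- The word `ν_{N-k+1}⋯ν_{k-1}ν_k′ ν₁⋯ν_N`. -/
def Wcase3 (τ : ℕ → S) (N k : ℕ) : List S :=
  seg (nuCase3 τ N k) (N - k + 1) (k - 1) ++ [flipS (nuCase3 τ N k k)] ++
    seg (nuCase3 τ N k) 1 N

/-- `e = (ν_{N-k+1}⋯ν_{k-1}ν_k′ ν₁⋯ν_N)^∞`. -/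
def eCase3 (τ : ℕ → S) (N k : ℕ) : ℕ → S := wrep (Wcase3 τ N k) []

/-- `ẽ = (ν_{N-k+1}⋯ν_{k-1}ν_k′ ν₁⋯ν_N)^∞ ν_{N-k+1}⋯ν_{N-1}ν_N′`. -/
def etCase3 (τ : ℕ → S) (N k : ℕ) : ℕ → S :=
  wrep (Wcase3 τ N k)
       (seg (nuCase3 τ N k) (N - k + 1) (N - 1) ++ [flipS (nuCase3 τ N k N)])

/- ==================== Auxiliary development ==================== -/

section Case3Proof

open Filter Topology

lemma S.isOpen_singleton {v : S} (hv : v ≠ S.star) : IsOpen ({v} : Set S) := by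
  cases v with
  | star => exact absurd rfl hv
  | one => exact TopologicalSpace.GenerateOpen.basic _ (Or.inl rfl)
  | two => exact TopologicalSpace.GenerateOpen.basic _ (Or.inr rfl)

lemma flipS_ne {a : S} (h : a ≠ S.star) : flipS a ≠ a := by
  cases a <;> simp [flipS] at h ⊢

lemma flipS_ne_star {a : S} (h : a ≠ S.star) : flipS a ≠ S.star := by
  cases a <;> simp [flipS] at h ⊢

/-- A star coordinate forces the forward tail to be `τ`. -/
lemma star_forces (τ : ℕ → S) {w : ℤ → S} (hw : w ∈ Dhat τ) {n : ℤ}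
    (h : w n = S.star) (i : ℕ) : w (n + i) = τ i := by
  have h0 : proj n w 0 = S.star := by simpa [proj] using h
  have h1 := (hw n).1 0 h0
  have h2 := congrFun h1 i
  simpa [shiftN, proj] using h2

lemma tau_add {τ : ℕ → S} {N : ℕ} (hper : shiftN N τ = τ) (i : ℕ) :
    τ (N + i) = τ i := congrFun hper i

lemma tau_mul {τ : ℕ → S} {N : ℕ} (hper : shiftN N τ = τ) (j i : ℕ) :
    τ (j * N + i) = τ i := by
  induction j with
  | zero => simp
  | succ m ih =>
      have : (m + 1) * N + i = N + (m * N + i) := by ring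
      rw [this, tau_add hper, ih]

/-- Main analytic lemma: a continuous path in `D̂_τ` whose endpoints disagree
(with fixed non-star value `v` on the left) along the coordinate positions
`-(2kt + c + 1)` for all `t ≥ 1` yields a contradiction. -/
lemma main_path_lemma (τ : ℕ → S) (N k : ℕ) (hper : shiftN N τ = τ)
    (hτ0 : τ 0 = S.star) (hN : 0 < N)
    (F : ℝ → ℤ → S) (hFc : Continuous F) (hFD : ∀ r, F r ∈ Dhat τ)
    (α β : ℝ) (hαβ : α < β) (v : S) (hv : v ≠ S.star)
    (hb : τ (2 * k) ≠ v) (hbs : τ (2 * k) ≠ S.star) (c : ℕ)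
    (h1 : ∀ t : ℕ, 1 ≤ t → F α (-(((2 * k * t + c : ℕ) : ℤ) + 1)) = v)
    (h2 : ∀ t : ℕ, 1 ≤ t → F β (-(((2 * k * t + c : ℕ) : ℤ) + 1)) ≠ v) : False := by
  set P : ℕ → ℤ := fun t => -(((2 * k * t + c : ℕ) : ℤ) + 1) with hP
  have hPP : ∀ t : ℕ, P (t + 1) + ((2 * k : ℕ) : ℤ) = P t := by
    intro t; simp only [hP]; push_cast; ring
  have hPP2 : ∀ j s : ℕ, P (j + N * s + 1) + ((2 * k * N * s : ℕ) : ℤ) = P (j + 1) := by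
    intro j s; simp only [hP]; push_cast; ring
  set SS : ℕ → Set ℝ := fun t => Set.Icc α β ∩ {r | F r (P t) ≠ v} with hSS
  have hopen : ∀ (p : ℤ) (u : S), u ≠ S.star → IsOpen {r : ℝ | F r p = u} := by
    intro p u hu
    have hc : Continuous fun r : ℝ => F r p := (continuous_apply p).comp hFc
    exact (S.isOpen_singleton hu).preimage hc
  have hclosed : ∀ t, IsClosed (SS t) := by
    intro t
    refine isClosed_Icc.inter ?_
    exact (hopen (P t) v hv).isClosed_compl
  have hne : ∀ t, 1 ≤ t → (SS t).Nonempty :=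
    fun t ht => ⟨β, ⟨hαβ.le, le_rfl⟩, h2 t ht⟩
  have hbdd : ∀ t, BddBelow (SS t) := fun t => ⟨α, fun r hr => hr.1.1⟩
  set T : ℕ → ℝ := fun t => sInf (SS (t + 1)) with hT
  have hmem : ∀ t, T t ∈ SS (t + 1) :=
    fun t => (hclosed _).csInf_mem (hne _ (Nat.le_add_left 1 t)) (hbdd _)
  have hTIcc : ∀ t, T t ∈ Set.Icc α β := fun t => (hmem t).1
  have hαT : ∀ t, α < T t := by
    intro t
    rcases lt_or_eq_of_le (hTIcc t).1 with h | h
    · exact h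
    · exact absurd (h ▸ h1 (t + 1) (Nat.le_add_left 1 t)) (hmem t).2
  -- at the first-change time the coordinate is a star
  have hstar : ∀ t, F (T t) (P (t + 1)) = S.star := by
    intro t
    by_contra hns
    set u := F (T t) (P (t + 1)) with hu
    have hne' : u ≠ v := (hmem t).2
    have hU : IsOpen {r : ℝ | F r (P (t + 1)) = u} := hopen _ _ hns
    rcases Metric.isOpen_iff.1 hU (T t) hu.symm with ⟨ε, hε, hball⟩
    set r := max α (T t - ε / 2) with hr
    have hr1 : α ≤ r := le_max_left _ _
    have hrlt : r < T t := max_lt (hαT t) (by linarith)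
    have hrball : r ∈ Metric.ball (T t) ε := by
      rw [Metric.mem_ball, Real.dist_eq]
      have h2' : T t - ε / 2 ≤ r := le_max_right _ _
      have : |r - T t| = T t - r := by
        rw [abs_of_nonpos (by linarith)]; ring
      rw [this]; linarith
    have hrv : F r (P (t + 1)) = v := by
      by_contra hrv
      have hrS : r ∈ SS (t + 1) := ⟨⟨hr1, hrlt.le.trans (hTIcc t).2⟩, hrv⟩
      exact absurd (csInf_le (hbdd _) hrS) (not_le.mpr hrlt)
    have := hball hrball
    rw [Set.mem_setOf_eq, hrv] at this
    exact hne' this.symm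
  have hprop : ∀ t (i : ℕ), F (T t) (P (t + 1) + i) = τ i :=
    fun t i => star_forces τ (hFD _) (hstar t) i
  have hmono : Monotone T := by
    apply monotone_nat_of_le_succ
    intro t
    have hval : F (T (t + 1)) (P (t + 1)) = τ (2 * k) := by
      have := hprop (t + 1) (2 * k)
      rwa [hPP (t + 1)] at this
    have hmem' : T (t + 1) ∈ SS (t + 1) :=
      ⟨hTIcc (t + 1), by rw [Set.mem_setOf_eq, hval]; exact hb⟩
    exact csInf_le (hbdd _) hmem'
  have hbddT : BddAbove (Set.range T) := by
    refine ⟨β, ?_⟩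
    rintro _ ⟨t, rfl⟩
    exact (hTIcc t).2
  set L := ⨆ t, T t with hL
  have hTL : Tendsto T atTop (𝓝 L) := tendsto_atTop_ciSup hmono hbddT
  have hsub : ∀ j : ℕ, Tendsto (fun s => T (j + N * s)) atTop (𝓝 L) := by
    intro j
    refine hTL.comp ?_
    refine Filter.tendsto_atTop_mono (fun s => ?_) Filter.tendsto_id
    have h1s : 1 * s ≤ N * s := Nat.mul_le_mul_right s hN
    simp only [id_eq]
    omega
  have hLstar : ∀ j : ℕ, F L (P (j + 1)) = S.star := by
    intro j
    by_contra hns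
    set u := F L (P (j + 1)) with hu
    have hU : IsOpen {r : ℝ | F r (P (j + 1)) = u} := hopen _ _ hns
    have hUnhds : {r : ℝ | F r (P (j + 1)) = u} ∈ 𝓝 L := hU.mem_nhds hu.symm
    have hev : ∀ᶠ s in atTop, F (T (j + N * s)) (P (j + 1)) = u :=
      (hsub j).eventually (eventually_of_mem hUnhds (fun r hr => hr))
    obtain ⟨s, hs⟩ := hev.exists
    have hst : F (T (j + N * s)) (P (j + 1)) = S.star := by
      have := hprop (j + N * s) (2 * k * N * s)
      rw [hPP2 j s] at this
      rw [this]
      have harith : 2 * k * N * s = (2 * k * s) * N + 0 := by ring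
      rw [harith, tau_mul hper, hτ0]
    rw [hst] at hs
    exact hns hs.symm
  have h1star : F L (P (0 + 1)) = S.star := hLstar 0
  have h2star : F L (P (1 + 1)) = S.star := hLstar 1
  have := star_forces τ (hFD L) h2star (2 * k)
  rw [hPP 1] at this
  rw [h1star] at this
  exact hbs this.symm

end Case3Proof

section Case3Values

lemma seg_length (ν : ℕ → S) (a b : ℕ) : (seg ν a b).length = b + 1 - a := by
  simp [seg]

lemma Wcase3_length (τ : ℕ → S) (N k : ℕ) (hk1 : N < 2 * k) (hk2 : k < N) :
    (Wcase3 τ N k).length = 2 * k := by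
  simp [Wcase3, seg_length]
  omega

lemma Wcase3_getD (τ : ℕ → S) (N k : ℕ) (hk1 : N < 2 * k) (hk2 : k < N) {i : ℕ}
    (hi1 : 2 * k - N ≤ i) (hi2 : i < 2 * k) :
    (Wcase3 τ N k).getD i S.star = nuCase3 τ N k (i - (2 * k - N) + 1) := by
  have hlen : (Wcase3 τ N k).length = 2 * k := Wcase3_length τ N k hk1 hk2
  rw [List.getD_eq_getElem _ _ (hlen ▸ hi2)]
  simp only [Wcase3]
  rw [List.getElem_append_right (by simp [seg_length]; omega)]
  simp only [seg, List.length_append, List.length_map, List.length_range,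
    List.length_cons, List.length_nil, List.getElem_map, List.getElem_range]
  congr 1
  omega

lemma e_class0 (τ : ℕ → S) (N k : ℕ) (hk1 : N < 2 * k) (hk2 : k < N) (t : ℕ) :
    eCase3 τ N k (2 * k * t + 0) = flipS (τ (N - k)) := by
  have hk0 : 0 < k := by omega
  simp only [eCase3, wrep, List.length_nil, add_zero]
  rw [if_neg (by omega), Wcase3_length τ N k hk1 hk2]
  rw [show 2 * k * t - 0 = 2 * k * t from rfl, Nat.mul_mod_right]
  rw [show 2 * k - 1 - 0 = 2 * k - 1 from rfl]
  rw [Wcase3_getD τ N k hk1 hk2 (by omega) (by omega)]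
  rw [show 2 * k - 1 - (2 * k - N) + 1 = N by omega]
  simp [nuCase3]

lemma e_classk (τ : ℕ → S) (N k : ℕ) (hk1 : N < 2 * k) (hk2 : k < N) (t : ℕ) :
    eCase3 τ N k (2 * k * t + k) = τ (N - k) := by
  have hk0 : 0 < k := by omega
  simp only [eCase3, wrep, List.length_nil]
  rw [if_neg (by omega), Wcase3_length τ N k hk1 hk2]
  rw [show 2 * k * t + k - 0 = k + 2 * k * t by omega]
  rw [Nat.add_mul_mod_self_left, Nat.mod_eq_of_lt (by omega)]
  rw [Wcase3_getD τ N k hk1 hk2 (by omega) (by omega)]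
  rw [show 2 * k - 1 - k - (2 * k - N) + 1 = N - k by omega]
  rw [show nuCase3 τ N k (N - k) = τ (N - k) by simp [nuCase3]; intro h; omega]

lemma Vcase3_length (τ : ℕ → S) (N k : ℕ) (hk1 : N < 2 * k) (hk2 : k < N) :
    (seg (nuCase3 τ N k) (N - k + 1) (N - 1) ++ [flipS (nuCase3 τ N k N)]).length = k := by
  simp [seg_length]
  omega

lemma et_class0 (τ : ℕ → S) (N k : ℕ) (hk1 : N < 2 * k) (hk2 : k < N) (t : ℕ)
    (ht : 1 ≤ t) : etCase3 τ N k (2 * k * t + 0) = τ (N - k) := by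
  have hk0 : 0 < k := by omega
  obtain ⟨t', rfl⟩ : ∃ t', t = t' + 1 := ⟨t - 1, by omega⟩
  have hx : 2 * k * (t' + 1) = 2 * k * t' + 2 * k := by ring
  simp only [etCase3, wrep, add_zero]
  rw [Vcase3_length τ N k hk1 hk2]
  rw [if_neg (by omega), Wcase3_length τ N k hk1 hk2]
  rw [show 2 * k * (t' + 1) - k = k + 2 * k * t' by omega]
  rw [Nat.add_mul_mod_self_left, Nat.mod_eq_of_lt (by omega)]
  rw [Wcase3_getD τ N k hk1 hk2 (by omega) (by omega)]
  rw [show 2 * k - 1 - k - (2 * k - N) + 1 = N - k by omega]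
  rw [show nuCase3 τ N k (N - k) = τ (N - k) by simp [nuCase3]; intro h; omega]

lemma et_classk (τ : ℕ → S) (N k : ℕ) (hk1 : N < 2 * k) (hk2 : k < N) (t : ℕ)
    (ht : 1 ≤ t) : etCase3 τ N k (2 * k * t + k) = flipS (τ (N - k)) := by
  have hk0 : 0 < k := by omega
  simp only [etCase3, wrep]
  rw [Vcase3_length τ N k hk1 hk2]
  rw [if_neg (by omega), Wcase3_length τ N k hk1 hk2]
  rw [show 2 * k * t + k - k = 2 * k * t by omega, Nat.mul_mod_right]
  rw [show 2 * k - 1 - 0 = 2 * k - 1 from rfl]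
  rw [Wcase3_getD τ N k hk1 hk2 (by omega) (by omega)]
  rw [show 2 * k - 1 - (2 * k - N) + 1 = N by omega]
  simp [nuCase3]

end Case3Values

/-- The backwards itineraries `e` and `ẽ` of Theorem `case3` lie on distinct
arc-components of `D̂_τ`. -/
theorem case3_distinct_arc_components
    (τ : ℕ → S) (hacc : Acceptable τ) (N : ℕ) (hper : HasPeriod τ N)
    (hτ0 : τ 0 = S.star) (hτi : ∀ i, 1 ≤ i → i < N → τ i ≠ S.star)
    (k : ℕ) (hk1 : N < 2 * k) (hk2 : k < N)
    (hmatch : ∀ i, 1 ≤ i → i ≤ N - k - 1 → τ (k + i) = τ i) :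
    ∀ x ∈ Dhat τ, ∀ y ∈ Dhat τ,
      bitin x = eCase3 τ N k → bitin y = etCase3 τ N k →
      ∀ A : Set (ℤ → S), A ⊆ Dhat τ → IsArcSet A → ¬(x ∈ A ∧ y ∈ A) := by
  intro x hx y hy hbx hby A hAD hArc
  rintro ⟨hxA, hyA⟩
  have hk0 : 0 < k := by omega
  have hNk : 0 < N := by omega
  obtain ⟨a0, b0, f, hemb, hrange, -, -⟩ := hArc
  rw [← hrange] at hxA hyA
  obtain ⟨px, hpx⟩ := hxA
  obtain ⟨py, hpy⟩ := hyA
  set F : ℝ → ℤ → S := fun r => f (Set.projIcc 0 1 zero_le_one r) with hF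
  have hFc : Continuous F := hemb.continuous.comp continuous_projIcc
  have hFD : ∀ r, F r ∈ Dhat τ := fun r => hAD (hrange ▸ Set.mem_range_self _)
  have hFx : F px = x := by
    show f (Set.projIcc 0 1 zero_le_one px) = x
    rw [Set.projIcc_val]; exact hpx
  have hFy : F py = y := by
    show f (Set.projIcc 0 1 zero_le_one py) = y
    rw [Set.projIcc_val]; exact hpy
  -- value facts
  have ha : τ (N - k) ≠ S.star := hτi _ (by omega) (by omega)
  have htau2k : τ (2 * k) = τ (2 * k - N) := by
    have h := tau_add hper.1 (2 * k - N)
    rwa [show N + (2 * k - N) = 2 * k by omega] at h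
  have hbs : τ (2 * k) ≠ S.star := by
    rw [htau2k]; exact hτi _ (by omega) (by omega)
  have hxv : ∀ m : ℕ, x (-((m : ℤ) + 1)) = eCase3 τ N k m := fun m => congrFun hbx m
  have hyv : ∀ m : ℕ, y (-((m : ℤ) + 1)) = etCase3 τ N k m := fun m => congrFun hby m
  -- x ≠ y
  have hxy : x ≠ y := by
    intro h
    have h1 := hxv (2 * k * 1 + 0)
    rw [h, hyv, et_class0 τ N k hk1 hk2 1 le_rfl, e_class0 τ N k hk1 hk2 1] at h1
    exact flipS_ne ha h1.symm
  have hpxy : (px : ℝ) ≠ (py : ℝ) := by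
    intro h
    exact hxy (by rw [← hpx, ← hpy, Subtype.ext h])
  rcases lt_or_gt_of_ne hpxy with hlt | hgt
  · -- x on the left
    by_cases hbv : τ (2 * k) = τ (N - k)
    · exact main_path_lemma τ N k hper.1 hτ0 hNk F hFc hFD px py hlt
        (flipS (τ (N - k))) (flipS_ne_star ha)
        (by rw [hbv]; exact (flipS_ne ha).symm) hbs 0
        (fun t ht => by rw [hFx, hxv, e_class0 τ N k hk1 hk2 t])
        (fun t ht => by
          rw [hFy, hyv, et_class0 τ N k hk1 hk2 t ht]
          exact (flipS_ne ha).symm)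
    · exact main_path_lemma τ N k hper.1 hτ0 hNk F hFc hFD px py hlt
        (τ (N - k)) ha hbv hbs k
        (fun t ht => by rw [hFx, hxv, e_classk τ N k hk1 hk2 t])
        (fun t ht => by
          rw [hFy, hyv, et_classk τ N k hk1 hk2 t ht]
          exact flipS_ne ha)
  · -- y on the left
    by_cases hbv : τ (2 * k) = τ (N - k)
    · exact main_path_lemma τ N k hper.1 hτ0 hNk F hFc hFD py px hgt
        (flipS (τ (N - k))) (flipS_ne_star ha)
        (by rw [hbv]; exact (flipS_ne ha).symm) hbs k
        (fun t ht => by rw [hFy, hyv, et_classk τ N k hk1 hk2 t ht])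
        (fun t ht => by
          rw [hFx, hxv, e_classk τ N k hk1 hk2 t]
          exact (flipS_ne ha).symm)
    · exact main_path_lemma τ N k hper.1 hτ0 hNk F hFc hFD py px hgt
        (τ (N - k)) ha hbv hbs 0
        (fun t ht => by rw [hFy, hyv, et_class0 τ N k hk1 hk2 t ht])
        (fun t ht => by
          rw [hFx, hxv, e_class0 τ N k hk1 hk2 t]
          exact flipS_ne ha)
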